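/- Let C be a coalgebra in the category of left H-Yetter-Drinfeld modules over a Hopf algebra H, and let C × H be the smash coproduct coalgebra with Δ(c⊗h) = (c₁ ⊗ c₂_(−1)h₁) ⊗ (c₂_(0) ⊗ h₂). Then the map P_R(c⊗h) = ε(h)(c ⊗ 1_H) is an idempotent Rota-Baxter operator of weight −1 on C × H. -/
import Mathlib


open TensorProduct LinearMap

/-- Rota--Baxter coalgebra of weight `γ`:
`Q(c₁)⊗Q(c₂) = Q(c)₁⊗Q(Q(c)₂) + Q(Q(c)₁)⊗Q(c)₂ + γ Q(c)₁⊗Q(c)₂`. -/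
def IsRotaBaxterCoalgebra (K : Type*) [Field K] {C : Type*} [AddCommGroup C] [Module K C]
    (D : C →ₗ[K] C ⊗[K] C) (Q : C →ₗ[K] C) (γ : K) : Prop :=
  TensorProduct.map Q Q ∘ₗ D =
    lTensor C Q ∘ₗ D ∘ₗ Q + rTensor C Q ∘ₗ D ∘ₗ Q + γ • (D ∘ₗ Q)


/-- A left Yetter--Drinfeld module over a Hopf algebra `H`: a left module `act` and a left
comodule `ρ` satisfying `h₁v₍₋₁₎ ⊗ h₂·v₍₀₎ = (h₁·v)₍₋₁₎h₂ ⊗ (h₁·v)₍₀₎`. -/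
def IsYetterDrinfeldModule (K : Type*) [Field K] (H : Type*) [Ring H] [HopfAlgebra K H]
    {V : Type*} [AddCommGroup V] [Module K V]
    (act : H ⊗[K] V →ₗ[K] V) (ρ : V →ₗ[K] H ⊗[K] V) : Prop :=
  -- left module axioms
  (∀ (h h' : H) (v : V), act (h ⊗ₜ[K] act (h' ⊗ₜ[K] v)) = act ((h * h') ⊗ₜ[K] v)) ∧
  (∀ v : V, act ((1 : H) ⊗ₜ[K] v) = v) ∧
  -- left comodule axioms
  (lTensor H ρ ∘ₗ ρ =
    (TensorProduct.assoc K H H V).toLinearMap ∘ₗ rTensor V (Coalgebra.comul (R := K)) ∘ₗ ρ) ∧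
  (∀ v : V, (TensorProduct.lid K V) ((rTensor V (Coalgebra.counit (R := K))) (ρ v)) = v) ∧
  -- Yetter--Drinfeld compatibility
  (TensorProduct.map (LinearMap.mul' K H) act ∘ₗ
      (tensorTensorTensorComm K H H H V).toLinearMap ∘ₗ
        TensorProduct.map (Coalgebra.comul (R := K)) ρ =
    rTensor V ((LinearMap.mul' K H) ∘ₗ (TensorProduct.comm K H H).toLinearMap) ∘ₗ
      (TensorProduct.assoc K H H V).symm.toLinearMap ∘ₗ
        lTensor H (ρ ∘ₗ act) ∘ₗ
          (TensorProduct.assoc K H H V).toLinearMap ∘ₗ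
            rTensor V (TensorProduct.comm K H H).toLinearMap ∘ₗ
              rTensor V (Coalgebra.comul (R := K)))

/-- A coalgebra in the category of left `H`-Yetter--Drinfeld modules:
a Yetter--Drinfeld module with a coassociative comultiplication `D` which is a
module-coalgebra (`Δ(h·c) = h₁·c₁ ⊗ h₂·c₂`) and a comodule-coalgebra
(`c₍₋₁₎ ⊗ c₍₀₎₁ ⊗ c₍₀₎₂ = c₁₍₋₁₎c₂₍₋₁₎ ⊗ c₁₍₀₎ ⊗ c₂₍₀₎`). -/
def IsYetterDrinfeldCoalgebra (K : Type*) [Field K] (H : Type*) [Ring H] [HopfAlgebra K H]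
    {C : Type*} [AddCommGroup C] [Module K C]
    (act : H ⊗[K] C →ₗ[K] C) (ρ : C →ₗ[K] H ⊗[K] C) (D : C →ₗ[K] C ⊗[K] C) : Prop :=
  IsYetterDrinfeldModule K H act ρ ∧
  -- coassociativity of D
  (rTensor C D ∘ₗ D = (TensorProduct.assoc K C C C).symm.toLinearMap ∘ₗ lTensor C D ∘ₗ D) ∧
  -- module-coalgebra
  (D ∘ₗ act =
    TensorProduct.map act act ∘ₗ (tensorTensorTensorComm K H H C C).toLinearMap ∘ₗ
      TensorProduct.map (Coalgebra.comul (R := K)) D) ∧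
  -- comodule-coalgebra
  (lTensor H D ∘ₗ ρ =
    TensorProduct.map (LinearMap.mul' K H) (LinearMap.id : C ⊗[K] C →ₗ[K] C ⊗[K] C) ∘ₗ
      (tensorTensorTensorComm K H C H C).toLinearMap ∘ₗ TensorProduct.map ρ ρ ∘ₗ D)

variable (K : Type*) [Field K] (H : Type*) [Ring H] [HopfAlgebra K H]
  (C : Type*) [AddCommGroup C] [Module K C]

/-- The smash coproduct comultiplication on `C ⊗ H`:
`Δ(c⊗h) = (c₁ ⊗ c₂₍₋₁₎h₁) ⊗ (c₂₍₀₎ ⊗ h₂)`. -/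
noncomputable def smashComul (ρ : C →ₗ[K] H ⊗[K] C) (D : C →ₗ[K] C ⊗[K] C) :
    C ⊗[K] H →ₗ[K] (C ⊗[K] H) ⊗[K] (C ⊗[K] H) :=
  (TensorProduct.assoc K C H (C ⊗[K] H)).symm.toLinearMap ∘ₗ
    lTensor C (TensorProduct.map (LinearMap.mul' K H)
        (LinearMap.id : C ⊗[K] H →ₗ[K] C ⊗[K] H) ∘ₗ
      (tensorTensorTensorComm K H C H H).toLinearMap) ∘ₗ
    (TensorProduct.assoc K C (H ⊗[K] C) (H ⊗[K] H)).toLinearMap ∘ₗ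
    lTensor (C ⊗[K] (H ⊗[K] C)) (Coalgebra.comul (R := K)) ∘ₗ
    rTensor H (lTensor C ρ ∘ₗ D)

theorem smashCoproduct_PR_rotaBaxter
    (act : H ⊗[K] C →ₗ[K] C) (ρ : C →ₗ[K] H ⊗[K] C) (D : C →ₗ[K] C ⊗[K] C)
    (hC : IsYetterDrinfeldCoalgebra K H act ρ D)
    -- P_R(c⊗h) = ε(h) (c ⊗ 1)
    (P : C ⊗[K] H →ₗ[K] C ⊗[K] H)
    (hP : P = lTensor C ((Algebra.linearMap K H) ∘ₗ Coalgebra.counit (R := K))) :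
    IsRotaBaxterCoalgebra K (smashComul K H C ρ D) P (-1) ∧ P ∘ₗ P = P := by
  obtain ⟨⟨_, _, _, hcounitρ, _⟩, _, _, _⟩ := hC
  -- the "core" of the smash comultiplication
  set E : (C ⊗[K] (H ⊗[K] C)) ⊗[K] (H ⊗[K] H) →ₗ[K] (C ⊗[K] H) ⊗[K] (C ⊗[K] H) :=
    (TensorProduct.assoc K C H (C ⊗[K] H)).symm.toLinearMap ∘ₗ
      lTensor C (TensorProduct.map (LinearMap.mul' K H)
          (LinearMap.id : C ⊗[K] H →ₗ[K] C ⊗[K] H) ∘ₗ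
        (tensorTensorTensorComm K H C H H).toLinearMap) ∘ₗ
      (TensorProduct.assoc K C (H ⊗[K] C) (H ⊗[K] H)).toLinearMap with hE
  have hEapp : ∀ (a : C) (x : H) (b : C) (y z : H),
      E ((a ⊗ₜ[K] (x ⊗ₜ[K] b)) ⊗ₜ[K] (y ⊗ₜ[K] z)) = (a ⊗ₜ[K] (x * y)) ⊗ₜ[K] (b ⊗ₜ[K] z) := by
    intro a x b y z
    simp [hE, tensorTensorTensorComm_tmul, mul'_apply]
  have hΔ : ∀ (c : C) (h : H),
      smashComul K H C ρ D (c ⊗ₜ[K] h)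
        = E ((lTensor C ρ (D c)) ⊗ₜ[K] (Coalgebra.comul (R := K) h)) := by
    intro c h
    simp [smashComul, hE]
  have hPapp : ∀ (c : C) (h : H),
      P (c ⊗ₜ[K] h) = (Coalgebra.counit (R := K) h) • (c ⊗ₜ[K] (1 : H)) := by
    intro c h
    simp [hP, Algebra.algebraMap_eq_smul_one, tmul_smul]
  -- counit applied through comul
  have hsc : ∀ h : H, (TensorProduct.lid K K)
      (TensorProduct.map (Coalgebra.counit (R := K)) (Coalgebra.counit (R := K))
        (Coalgebra.comul (R := K) h)) = Coalgebra.counit (R := K) h := by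
    intro h
    have h1 : (Coalgebra.counit (R := K)).lTensor H (Coalgebra.comul (R := K) h)
        = h ⊗ₜ[K] (1 : K) := LinearMap.congr_fun Coalgebra.lTensor_counit_comp_comul h
    rw [← rTensor_comp_lTensor, LinearMap.comp_apply, h1]
    simp
  -- (id ⊗ P) fixes E (t ⊗ (1 ⊗ 1))
  have h4 : ∀ t : C ⊗[K] (H ⊗[K] C),
      lTensor (C ⊗[K] H) P (E (t ⊗ₜ[K] ((1 : H) ⊗ₜ[K] (1 : H))))
        = E (t ⊗ₜ[K] ((1 : H) ⊗ₜ[K] (1 : H))) := by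
    intro t
    induction t using TensorProduct.induction_on with
    | zero => simp
    | tmul a u =>
      induction u using TensorProduct.induction_on with
      | zero => simp [tmul_zero, zero_tmul]
      | tmul x b =>
        rw [hEapp]
        simp [hPapp]
      | add u v hu hv =>
        simp only [tmul_add, add_tmul, map_add, hu, hv]
    | add t s ht hs => simp only [add_tmul, map_add, ht, hs]
  -- the general (P ⊗ P) computation
  have hsmul2 : ∀ (k1 k2 : K) (m n : C ⊗[K] H),
      (k1 • m) ⊗ₜ[K] (k2 • n) = (k1 * k2) • (m ⊗ₜ[K] n) := by
    intro k1 k2 m n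
    rw [← smul_tmul', tmul_smul, smul_smul]
  have h6a : ∀ (a : C) (u : H ⊗[K] C) (v : H ⊗[K] H),
      TensorProduct.map P P (E ((a ⊗ₜ[K] u) ⊗ₜ[K] v))
        = ((TensorProduct.lid K K)
            (TensorProduct.map (Coalgebra.counit (R := K)) (Coalgebra.counit (R := K)) v)) •
          ((a ⊗ₜ[K] (1 : H)) ⊗ₜ[K]
            (((TensorProduct.lid K C) ((Coalgebra.counit (R := K)).rTensor C u)) ⊗ₜ[K] (1 : H))) := by
    intro a u v
    induction u using TensorProduct.induction_on with
    | zero => simp [tmul_zero, zero_tmul]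
    | tmul x b =>
      induction v using TensorProduct.induction_on with
      | zero => simp [tmul_zero]
      | tmul y z =>
        rw [hEapp, map_tmul, hPapp, hPapp, hsmul2, map_tmul, rTensor_tmul,
          TensorProduct.lid_tmul, TensorProduct.lid_tmul, ← smul_tmul', tmul_smul,
          smul_smul, Bialgebra.counit_mul]
        congr 1
        simp only [smul_eq_mul]
        ring
      | add v w hv hw =>
        simp only [tmul_add, map_add, hv, hw, add_smul]
    | add u w hu hw =>
      simp only [add_tmul, map_add, hu, hw, tmul_add, smul_add]
  -- rTensor P on E(lTensor ρ s ⊗ 1⊗1) gives (a⊗1)⊗(b⊗1)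
  have h5a : ∀ (a : C) (u : H ⊗[K] C),
      rTensor (C ⊗[K] H) P (E ((a ⊗ₜ[K] u) ⊗ₜ[K] ((1 : H) ⊗ₜ[K] (1 : H))))
        = (a ⊗ₜ[K] (1 : H)) ⊗ₜ[K]
            (((TensorProduct.lid K C) ((Coalgebra.counit (R := K)).rTensor C u)) ⊗ₜ[K] (1 : H)) := by
    intro a u
    induction u using TensorProduct.induction_on with
    | zero => simp [tmul_zero, zero_tmul]
    | tmul x b =>
      rw [hEapp, mul_one, rTensor_tmul, hPapp, smul_tmul, smul_tmul']
      simp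
    | add u w hu hw =>
      simp only [add_tmul, map_add, hu, hw, tmul_add]
  have h5 : ∀ s : C ⊗[K] C,
      rTensor (C ⊗[K] H) P (E ((lTensor C ρ s) ⊗ₜ[K] ((1 : H) ⊗ₜ[K] (1 : H))))
        = TensorProduct.map ((TensorProduct.mk K C H).flip 1) ((TensorProduct.mk K C H).flip 1)
            s := by
    intro s
    induction s using TensorProduct.induction_on with
    | zero => simp
    | tmul a b =>
      rw [lTensor_tmul, h5a, hcounitρ b]
      simp
    | add s t hs ht => simp only [map_add, add_tmul, hs, ht]
  have h6 : ∀ (s : C ⊗[K] C) (h : H),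
      TensorProduct.map P P (E ((lTensor C ρ s) ⊗ₜ[K] (Coalgebra.comul (R := K) h)))
        = (Coalgebra.counit (R := K) h) •
            TensorProduct.map ((TensorProduct.mk K C H).flip 1) ((TensorProduct.mk K C H).flip 1)
              s := by
    intro s h
    induction s using TensorProduct.induction_on with
    | zero => simp
    | tmul a b =>
      rw [lTensor_tmul, h6a, hsc, hcounitρ b]
      simp [smul_tmul']
    | add s t hs ht =>
      simp only [map_add, add_tmul, hs, ht, smul_add]
  constructor
  · unfold IsRotaBaxterCoalgebra
    apply TensorProduct.ext'
    intro c h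
    have hΔP : smashComul K H C ρ D (P (c ⊗ₜ[K] h))
        = (Coalgebra.counit (R := K) h) •
            E ((lTensor C ρ (D c)) ⊗ₜ[K] ((1 : H) ⊗ₜ[K] (1 : H))) := by
      rw [hPapp, map_smul, hΔ, Bialgebra.comul_one, Algebra.TensorProduct.one_def]
    simp only [LinearMap.comp_apply, LinearMap.add_apply, LinearMap.smul_apply]
    rw [hΔ, h6, hΔP, map_smul, map_smul, h4, h5]
    module
  · rw [hP, ← lTensor_comp]
    congr 1
    apply LinearMap.ext
    intro h
    simp [Algebra.algebraMap_eq_smul_one]
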